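/- Fix v ∈ (0,1]. Define the v-discounted occupation mass matrix at level x ∈ ℤ by (L̃_v(x,∞))_{ij} := Σ_{k=0}^{∞} v^k ℙ(X_k = x, J_k = j | X_0 = 0, J_0 = i), and let L̃_v := L̃_v(0,∞), assumed to have finite entries. Then for every x ∈ ℤ, L̃_v(x,∞) = 𝔼(v^{τ^{x}}; J_{τ^{x}}) · L̃_v, where τ^{x} := inf{n ≥ 0 : X_n = x} and 𝔼(v^{τ^{x}}; J_{τ^{x}}) is the matrix with (i,j)-entry 𝔼(v^{τ^{x}} 1_{{τ^{x}<∞, J_{τ^{x}}=j}} | X_0 = 0, J_0 = i). -/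

import Mathlib

/- Framework: a discrete-time, discrete-space upward skip-free Markov additive chain (MAC)
on ℤ × {1,…,N}, with one-step transition matrices `A m` (for a level increment of `m`), is
encoded combinatorially: the law of the chain started at a state `s` is determined by the
weights of its finite trajectories, so every probability/expectation appearing in the paper
can be written as a (countable) sum of trajectory weights. -/

attribute [local instance] Classical.propDecidable

noncomputable section

namespace MACPaper

/-- state space: level × phase -/
abbrev S (N : ℕ) := ℤ × Fin N

variable {N : ℕ}

/-- one-step transition weight -/
def step (A : ℤ → Matrix (Fin N) (Fin N) ℝ) (s t : S N) : ℝ :=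
  A (t.1 - s.1) s.2 t.2

/-- probability weight of a finite trajectory, given by the list of successive states after `s` -/
def wt (A : ℤ → Matrix (Fin N) (Fin N) ℝ) : S N → List (S N) → ℝ
  | _, [] => 1
  | s, t :: r => step A s t * wt A t r

/-- the trajectory (as a function of time) determined by start `s` and subsequent states `l` -/
def pos (s : S N) (l : List (S N)) : ℕ → S N
  | 0 => s
  | n + 1 => l.getD n s

/-- expectation of a path functional over trajectories of length `n` started at `s` -/
def expec (A : ℤ → Matrix (Fin N) (Fin N) ℝ) (s : S N) (n : ℕ)
    (f : (ℕ → S N) → ℝ) : ℝ :=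
  ∑' l : { l : List (S N) // l.length = n }, f (pos s l.1) * wt A s l.1

/-- probability of an event depending on the trajectory up to time `n` -/
def prob (A : ℤ → Matrix (Fin N) (Fin N) ℝ) (s : S N) (n : ℕ)
    (E : (ℕ → S N) → Prop) : ℝ :=
  expec A s n fun p => if E p then 1 else 0

/-- F(z) = Σ_{m=-1}^{∞} z^m A_{-m}   (entrywise) -/
def Fmat (A : ℤ → Matrix (Fin N) (Fin N) ℝ) (z : ℝ) : Matrix (Fin N) (Fin N) ℝ :=
  Matrix.of fun i j => ∑' m : ℤ, z ^ m * A (-m) i j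

/-- P = Σ_m A_m  (entrywise) -/
def Pmat (A : ℤ → Matrix (Fin N) (Fin N) ℝ) : Matrix (Fin N) (Fin N) ℝ :=
  Matrix.of fun i j => ∑' m : ℤ, A m i j

/-- `τ^{x} = n`: the chain first hits level `x` at time `n` -/
def hitsAt (x : ℤ) (n : ℕ) (p : ℕ → S N) : Prop :=
  (p n).1 = x ∧ ∀ k < n, (p k).1 ≠ x

/-- matrix 𝔼(v^{τ^{x}}; τ^{x} < ∞, J_{τ^{x}}), chain started at (0,·) -/
def hitMat (A : ℤ → Matrix (Fin N) (Fin N) ℝ) (v : ℝ) (x : ℤ) :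
    Matrix (Fin N) (Fin N) ℝ :=
  Matrix.of fun i j =>
    ∑' n : ℕ, v ^ n * prob A ((0 : ℤ), i) n fun p => hitsAt x n p ∧ (p n).2 = j

/-- v-discounted occupation mass matrix at level `x` (infinite horizon), chain started at (0,·) -/
def occMat (A : ℤ → Matrix (Fin N) (Fin N) ℝ) (v : ℝ) (x : ℤ) :
    Matrix (Fin N) (Fin N) ℝ :=
  Matrix.of fun i j =>
    ∑' k : ℕ, v ^ k * prob A ((0 : ℤ), i) k fun p => p k = (x, j)

/-- v-discounted occupation mass at level 0 up to the first hitting time of level `n` -/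
def occUpToMat (A : ℤ → Matrix (Fin N) (Fin N) ℝ) (v : ℝ) (n : ℤ) :
    Matrix (Fin N) (Fin N) ℝ :=
  Matrix.of fun i j =>
    ∑' k : ℕ, v ^ k * prob A ((0 : ℤ), i) k fun p =>
      p k = ((0 : ℤ), j) ∧ ∀ m < k, (p m).1 ≠ n

/-- the fundamental matrix G = ℙ(J_{τ^{1}}) -/
def Gmat (A : ℤ → Matrix (Fin N) (Fin N) ℝ) : Matrix (Fin N) (Fin N) ℝ :=
  hitMat A 1 1

/-- L̃ : occupation mass matrix at level 0, infinite horizon -/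
def Ltilde (A : ℤ → Matrix (Fin N) (Fin N) ℝ) : Matrix (Fin N) (Fin N) ℝ :=
  occMat A 1 0

/-- the first scale matrix W(n) = (G^{-n} - ℙ(J_{τ^{-n}})) L̃ -/
def Wmat (A : ℤ → Matrix (Fin N) (Fin N) ℝ) (n : ℕ) : Matrix (Fin N) (Fin N) ℝ :=
  ((Gmat A)⁻¹ ^ n - hitMat A 1 (-(n : ℤ))) * Ltilde A

/-- v-discounted first scale matrix W_v(n) = (G_v^{-n} - 𝔼(v^{τ^{-n}}; J_{τ^{-n}})) L̃_v -/
def WmatV (A : ℤ → Matrix (Fin N) (Fin N) ℝ) (v : ℝ) (n : ℕ) :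
    Matrix (Fin N) (Fin N) ℝ :=
  ((hitMat A v 1)⁻¹ ^ n - hitMat A v (-(n : ℤ))) * occMat A v 0

/-- the second scale matrix Z(z,n) = z^{-n}[I + Σ_{k=0}^{n} z^k W(k) (I - F(z))] -/
def Zmat (A : ℤ → Matrix (Fin N) (Fin N) ℝ) (z : ℝ) (n : ℕ) :
    Matrix (Fin N) (Fin N) ℝ :=
  z⁻¹ ^ n • (1 + (∑ k ∈ Finset.range (n + 1), z ^ k • Wmat A k) * (1 - Fmat A z))

/-- matrix 𝔼(v^{τ_a^+}; τ_a^+ < τ_{-b}^-, J_{τ_a^+}) (upward exit from the strip [-b,a]) -/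
def upExitMat (A : ℤ → Matrix (Fin N) (Fin N) ℝ) (v : ℝ) (a b : ℤ) :
    Matrix (Fin N) (Fin N) ℝ :=
  Matrix.of fun i j =>
    ∑' n : ℕ, v ^ n * prob A ((0 : ℤ), i) n fun p =>
      a ≤ (p n).1 ∧ (∀ k < n, -b < (p k).1 ∧ (p k).1 < a) ∧ (p n).2 = j

/-- matrix 𝔼(z^{-X_{τ_{-b}^-}}; τ_{-b}^- < τ_a^+, J_{τ_{-b}^-}) (downward exit from [-b,a]) -/
def downExitMat (A : ℤ → Matrix (Fin N) (Fin N) ℝ) (z : ℝ) (a b : ℤ) :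
    Matrix (Fin N) (Fin N) ℝ :=
  Matrix.of fun i j =>
    ∑' n : ℕ, expec A ((0 : ℤ), i) n fun p =>
      if (p n).1 ≤ -b ∧ (∀ k < n, -b < (p k).1 ∧ (p k).1 < a) ∧ (p n).2 = j
      then z ^ (-(p n).1) else 0

/-- matrix 𝔼(z^{-X_{τ_{-b}^-}}; τ_{-b}^- < ∞, J_{τ_{-b}^-}) (one-sided downward exit) -/
def oneDownMat (A : ℤ → Matrix (Fin N) (Fin N) ℝ) (z : ℝ) (b : ℤ) :
    Matrix (Fin N) (Fin N) ℝ :=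
  Matrix.of fun i j =>
    ∑' n : ℕ, expec A ((0 : ℤ), i) n fun p =>
      if (p n).1 ≤ -b ∧ (∀ k < n, -b < (p k).1) ∧ (p n).2 = j
      then z ^ (-(p n).1) else 0

/-- two-sided Skorokhod reflection of the level path `X` in [-d,0], started at `x`:
the regulated process H -/
def reflH (d : ℕ) (x : ℤ) (X : ℕ → ℤ) : ℕ → ℤ
  | 0 => x
  | n + 1 =>
      reflH d x X n + (X (n + 1) - X n)
        - max (reflH d x X n + (X (n + 1) - X n)) 0
        + max (-(d : ℤ) - (reflH d x X n + (X (n + 1) - X n))) 0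

/-- upper regulator R^+ of the two-sided reflection in [-d,0] -/
def reflRp (d : ℕ) (x : ℤ) (X : ℕ → ℤ) : ℕ → ℤ
  | 0 => 0
  | n + 1 => reflRp d x X n + max (reflH d x X n + (X (n + 1) - X n)) 0

/-- lower regulator R^- of the two-sided reflection in [-d,0] -/
def reflRm (d : ℕ) (x : ℤ) (X : ℕ → ℤ) : ℕ → ℤ
  | 0 => 0
  | n + 1 => reflRm d x X n + max (-(d : ℤ) - (reflH d x X n + (X (n + 1) - X n))) 0

/-- lower regulator of the one-sided reflection at -b : R^{-b}_n = -b - min(-b, min_{k≤n} X_k) -/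
def lowReg (b : ℤ) (X : ℕ → ℤ) (n : ℕ) : ℤ :=
  -b - min (-b) ((Finset.range (n + 1)).inf' Finset.nonempty_range_add_one X)

/-! Split every trajectory reaching `(x, j)` at time `k` at its first passage `n ≤ k` through
level `x`, in phase `m` say. By the Markov property at the deterministic time `n` the weight
factorises into the first-passage weight at `(n, m)` and the weight of going from `(x, m)` to
`(x, j)` in `k - n` steps, and translation invariance moves the latter to level `0`. Summing
`v ^ k` times this over `k` is a Cauchy product of the series defining `hitMat` and `occMat`; the
first-passage series converges because the first-passage events at different times are disjoint. -/

open Finset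

section Kernel

variable {α β : Type*} {f : α → ℝ} {g : α → β → ℝ} {C : ℝ}

lemma summable_mul_tsum_of_tsum_le (hf0 : ∀ a, 0 ≤ f a) (hg0 : ∀ a b, 0 ≤ g a b)
    (hf : Summable f) (hgC : ∀ a, ∑' b, g a b ≤ C) : Summable fun a => f a * ∑' b, g a b :=
  (hf.mul_right C).of_nonneg_of_le (fun a => mul_nonneg (hf0 a) (tsum_nonneg (hg0 a)))
    fun a => mul_le_mul_of_nonneg_left (hgC a) (hf0 a)

lemma summable_prod_mul_of_tsum_le (hf0 : ∀ a, 0 ≤ f a) (hg0 : ∀ a b, 0 ≤ g a b)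
    (hf : Summable f) (hg : ∀ a, Summable (g a)) (hgC : ∀ a, ∑' b, g a b ≤ C) :
    Summable fun q : α × β => f q.1 * g q.1 q.2 :=
  (summable_prod_of_nonneg fun q => mul_nonneg (hf0 q.1) (hg0 q.1 q.2)).mpr
    ⟨fun a => (hg a).mul_left (f a), (summable_mul_tsum_of_tsum_le hf0 hg0 hf hgC).congr
      fun a => (tsum_mul_left (f := g a) (a := f a)).symm⟩

lemma tsum_prod_mul_eq_of_tsum_le (hf0 : ∀ a, 0 ≤ f a) (hg0 : ∀ a b, 0 ≤ g a b)
    (hf : Summable f) (hg : ∀ a, Summable (g a)) (hgC : ∀ a, ∑' b, g a b ≤ C) :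
    ∑' q : α × β, f q.1 * g q.1 q.2 = ∑' a, f a * ∑' b, g a b := by
  rw [(summable_prod_mul_of_tsum_le hf0 hg0 hf hg hgC).tsum_prod' fun a => (hg a).mul_left (f a)]
  exact tsum_congr fun a => tsum_mul_left (f := g a) (a := f a)

end Kernel

lemma indicator_nonneg (P : Prop) : (0 : ℝ) ≤ if P then 1 else 0 := ite_nonneg zero_le_one le_rfl

lemma indicator_le_one (P : Prop) : (if P then 1 else 0 : ℝ) ≤ 1 := ite_le_one le_rfl zero_le_one

structure IsSubstochastic (A : ℤ → Matrix (Fin N) (Fin N) ℝ) : Prop where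
  nonneg : ∀ s t : S N, 0 ≤ step A s t
  summable : ∀ s : S N, Summable (step A s)
  tsum_le_one : ∀ s : S N, ∑' t, step A s t ≤ 1

def translate (c : ℤ) : S N ≃ S N := (Equiv.addRight c).prodCongr (Equiv.refl _)

@[simp]
lemma translate_apply (c : ℤ) (s : S N) : translate c s = (s.1 + c, s.2) := rfl

lemma step_translate (A : ℤ → Matrix (Fin N) (Fin N) ℝ) (c : ℤ) (s t : S N) :
    step A (translate c s) (translate c t) = step A s t := by
  simp [step]

lemma isSubstochastic_of_rows {A : ℤ → Matrix (Fin N) (Fin N) ℝ} (hA : ∀ m i j, 0 ≤ A m i j)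
    (hsum : ∀ i, Summable fun q : ℤ × Fin N => A q.1 i q.2)
    (hsub : ∀ i, ∑' q : ℤ × Fin N, A q.1 i q.2 ≤ 1) : IsSubstochastic A := by
  have hstep (s : S N) : step A s = (fun q : ℤ × Fin N => A q.1 s.2 q.2) ∘ translate (-s.1) := rfl
  refine ⟨fun s t => hA _ _ _, fun s => ?_, fun s => ?_⟩
  · rw [hstep]
    exact (translate (-s.1)).summable_iff.mpr (hsum s.2)
  · rw [hstep]
    exact ((translate (-s.1)).tsum_eq (fun q : ℤ × Fin N => A q.1 s.2 q.2)).trans_le (hsub s.2)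

abbrev Traj (N n : ℕ) := {l : List (S N) // l.length = n}

instance : Unique (Traj N 0) where
  default := ⟨[], rfl⟩
  uniq l := Subtype.ext (List.length_eq_zero_iff.mp l.2)

def Traj.consEquiv (n : ℕ) : Traj N (n + 1) ≃ S N × Traj N n where
  toFun
    | ⟨t :: l, h⟩ => (t, ⟨l, Nat.succ.inj h⟩)
  invFun q := ⟨q.1 :: q.2.1, congrArg (· + 1) q.2.2⟩
  left_inv
    | ⟨_ :: _, _⟩ => rfl
  right_inv _ := rfl

def Traj.appendEquiv (n m : ℕ) : Traj N (n + m) ≃ Traj N n × Traj N m where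
  toFun l := (⟨l.1.take n, by simp [l.2]⟩, ⟨l.1.drop n, by simp [l.2]⟩)
  invFun q := ⟨q.1.1 ++ q.2.1, by simp [q.1.2, q.2.2]⟩
  left_inv l := Subtype.ext (List.take_append_drop n l.1)
  right_inv q :=
    Prod.ext (Subtype.ext (List.take_left' q.1.2)) (Subtype.ext (List.drop_left' q.1.2))

def Traj.mapEquiv (e : S N ≃ S N) (n : ℕ) : Traj N n ≃ Traj N n :=
  e.listEquivOfEquiv.subtypeEquiv fun l => by simp [Equiv.listEquivOfEquiv]

lemma pos_append_of_le (s : S N) (l₁ l₂ : List (S N)) {k : ℕ} (hk : k ≤ l₁.length) :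
    pos s (l₁ ++ l₂) k = pos s l₁ k := by
  cases k with
  | zero => rfl
  | succ k => exact List.getD_append _ _ _ _ hk

lemma pos_append_add (s : S N) (l₁ l₂ : List (S N)) {k : ℕ} (hk : k ≤ l₂.length) :
    pos s (l₁ ++ l₂) (l₁.length + k) = pos (pos s l₁ l₁.length) l₂ k := by
  cases k with
  | zero => exact pos_append_of_le s l₁ l₂ le_rfl
  | succ k =>
    show (l₁ ++ l₂).getD (l₁.length + k) s = l₂.getD k _
    rw [List.getD_append_right _ _ _ _ (Nat.le_add_right _ _), Nat.add_sub_cancel_left,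
      List.getD_eq_getElem _ _ hk, List.getD_eq_getElem _ _ hk]

lemma pos_cons_succ (s t : S N) (l : List (S N)) {k : ℕ} (hk : k ≤ l.length) :
    pos s (t :: l) (k + 1) = pos t l k := by
  cases k with
  | zero => rfl
  | succ k =>
    show (t :: l).getD (k + 1) s = l.getD k t
    rw [List.getD_cons_succ, List.getD_eq_getElem _ _ hk, List.getD_eq_getElem _ _ hk]

lemma pos_map (e : S N ≃ S N) (s : S N) (l : List (S N)) (k : ℕ) :
    pos (e s) (l.map e) k = e (pos s l k) := by
  cases k with
  | zero => rfl
  | succ k => exact List.getD_map _ _ _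

section Trajectories

variable (A : ℤ → Matrix (Fin N) (Fin N) ℝ)

lemma wt_cons (s t : S N) (l : List (S N)) : wt A s (t :: l) = step A s t * wt A t l := rfl

lemma wt_append (s : S N) (l₁ l₂ : List (S N)) :
    wt A s (l₁ ++ l₂) = wt A s l₁ * wt A (pos s l₁ l₁.length) l₂ := by
  induction l₁ generalizing s with
  | nil => simp [wt, pos]
  | cons t l ih =>
    rw [List.cons_append, wt_cons, wt_cons, ih, mul_assoc, List.length_cons,
      pos_cons_succ s t l le_rfl]

lemma wt_map_translate (c : ℤ) (s : S N) (l : List (S N)) :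
    wt A (translate c s) (l.map (translate c)) = wt A s l := by
  induction l generalizing s with
  | nil => rfl
  | cons t l ih => rw [List.map_cons, wt_cons, wt_cons, step_translate, ih]

lemma prob_eq_tsum (s : S N) (n : ℕ) (E : (ℕ → S N) → Prop) :
    prob A s n E = ∑' l : Traj N n, (if E (pos s l.1) then 1 else 0) * wt A s l.1 := rfl

lemma prob_translate (c : ℤ) (s : S N) (n : ℕ) (E : (ℕ → S N) → Prop) :
    prob A (translate c s) n E = prob A s n fun p => E (translate c ∘ p) := by
  rw [prob_eq_tsum, prob_eq_tsum, ← (Traj.mapEquiv (translate c) n).tsum_eq]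
  refine tsum_congr fun l => ?_
  show (if E (pos (translate c s) (l.1.map (translate c))) then 1 else 0)
      * wt A (translate c s) (l.1.map (translate c)) = _
  rw [wt_map_translate, funext (pos_map (translate c) s l.1)]
  rfl

lemma prob_eval_translate (c : ℤ) (s t : S N) (n : ℕ) :
    prob A (translate c s) n (fun p => p n = translate c t) = prob A s n fun p => p n = t := by
  rw [prob_translate]
  simp only [Function.comp_apply, EmbeddingLike.apply_eq_iff_eq]

end Trajectories

def DeterminedUpTo (n : ℕ) (E : (ℕ → S N) → Prop) : Prop :=
  ∀ p q : ℕ → S N, (∀ k ≤ n, p k = q k) → (E p ↔ E q)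

lemma DeterminedUpTo.and {n : ℕ} {E F : (ℕ → S N) → Prop} (hE : DeterminedUpTo n E)
    (hF : DeterminedUpTo n F) : DeterminedUpTo n fun p => E p ∧ F p :=
  fun p q h => and_congr (hE p q h) (hF p q h)

lemma determinedUpTo_eval (n : ℕ) (t : S N) : DeterminedUpTo n fun p => p n = t :=
  fun p q h => by dsimp only; rw [h n le_rfl]

lemma determinedUpTo_hitsAt (x : ℤ) (n : ℕ) : DeterminedUpTo n (hitsAt (N := N) x n) :=
  fun p q h => by
    simp only [hitsAt]
    rw [h n le_rfl]
    exact and_congr_right fun _ => forall₂_congr fun k hk => by rw [h k hk.le]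

lemma determinedUpTo_avoid (x : ℤ) (n : ℕ) :
    DeterminedUpTo n fun p : ℕ → S N => ∀ k < n + 1, (p k).1 ≠ x :=
  fun p q h => forall₂_congr fun k hk => by rw [h k (Nat.lt_succ_iff.mp hk)]

lemma hitsAt_unique {x : ℤ} {n n' : ℕ} {p : ℕ → S N} (h : hitsAt x n p) (h' : hitsAt x n' p) :
    n = n' := by
  by_contra hne
  rcases Nat.lt_or_gt_of_ne hne with hlt | hlt
  · exact h'.2 n hlt h.1
  · exact h.2 n' hlt h'.1

lemma exists_hitsAt_of_level {x : ℤ} {k : ℕ} {p : ℕ → S N} (hk : (p k).1 = x) :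
    ∃ n ≤ k, hitsAt x n p := by
  have hex : ∃ n, (p n).1 = x := ⟨k, hk⟩
  exact ⟨Nat.find hex, Nat.find_min' hex hk, Nat.find_spec hex, fun _ => Nat.find_min hex⟩


namespace IsSubstochastic

variable {A : ℤ → Matrix (Fin N) (Fin N) ℝ} (hA : IsSubstochastic A)
include hA

lemma wt_nonneg (s : S N) (l : List (S N)) : 0 ≤ wt A s l := by
  induction l generalizing s with
  | nil => exact zero_le_one
  | cons t l ih => exact mul_nonneg (hA.nonneg s t) (ih t)

lemma summable_wt_and_tsum_wt_le_one (n : ℕ) (s : S N) :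
    Summable (fun l : Traj N n => wt A s l.1) ∧ ∑' l : Traj N n, wt A s l.1 ≤ 1 := by
  induction n generalizing s with
  | zero =>
    refine ⟨Summable.of_finite, ?_⟩
    rw [tsum_eq_single default fun l hl => absurd (Subsingleton.elim l default) hl]
    exact le_rfl
  | succ n ih =>
    have hcons : (fun l : Traj N (n + 1) => wt A s l.1)
        = (fun q : S N × Traj N n => step A s q.1 * wt A q.1 q.2.1) ∘ Traj.consEquiv n := by
      funext l
      match l with
      | ⟨_ :: _, _⟩ => rfl
    have hf0 := hA.nonneg s
    have hg0 (t : S N) (l : Traj N n) := hA.wt_nonneg t l.1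
    have hgC (t : S N) := (ih t).2
    have hF := summable_prod_mul_of_tsum_le hf0 hg0 (hA.summable s) (fun t => (ih t).1) hgC
    refine ⟨by rw [hcons]; exact (Traj.consEquiv n).summable_iff.mpr hF, ?_⟩
    calc ∑' l : Traj N (n + 1), wt A s l.1
        = ∑' q : S N × Traj N n, step A s q.1 * wt A q.1 q.2.1 := by
          rw [hcons]
          exact (Traj.consEquiv n).tsum_eq fun q : S N × Traj N n => step A s q.1 * wt A q.1 q.2.1
      _ = ∑' t, step A s t * ∑' l : Traj N n, wt A t l.1 :=
          tsum_prod_mul_eq_of_tsum_le hf0 hg0 (hA.summable s) (fun t => (ih t).1) hgC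
      _ ≤ ∑' t, step A s t :=
          (summable_mul_tsum_of_tsum_le hf0 hg0 (hA.summable s) hgC).tsum_le_tsum
            (fun t => mul_le_of_le_one_right (hf0 t) (hgC t)) (hA.summable s)
      _ ≤ 1 := hA.tsum_le_one s

lemma summable_expec {f : (ℕ → S N) → ℝ} {C : ℝ} (hf : ∀ p, |f p| ≤ C) (s : S N) (n : ℕ) :
    Summable fun l : Traj N n => f (pos s l.1) * wt A s l.1 :=
  ((hA.summable_wt_and_tsum_wt_le_one n s).1.mul_left C).of_norm_bounded fun l => by
    rw [norm_mul, Real.norm_eq_abs, Real.norm_of_nonneg (hA.wt_nonneg _ _)]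
    exact mul_le_mul_of_nonneg_right (hf _) (hA.wt_nonneg _ _)

lemma expec_mono {f g : (ℕ → S N) → ℝ} (hf : ∀ p, 0 ≤ f p) (hfg : ∀ p, f p ≤ g p)
    (hg : ∀ p, g p ≤ 1) (s : S N) (n : ℕ) : expec A s n f ≤ expec A s n g :=
  Summable.tsum_le_tsum (fun l => mul_le_mul_of_nonneg_right (hfg _) (hA.wt_nonneg _ _))
    (hA.summable_expec (fun p => abs_le.mpr ⟨by linarith [hf p], (hfg p).trans (hg p)⟩) s n)
    (hA.summable_expec (fun p => abs_le.mpr ⟨by linarith [hf p, hfg p], hg p⟩) s n)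

lemma summable_prob (E : (ℕ → S N) → Prop) (s : S N) (n : ℕ) :
    Summable fun l : Traj N n => (if E (pos s l.1) then 1 else 0) * wt A s l.1 :=
  hA.summable_expec (fun p => abs_le.mpr ⟨by linarith [indicator_nonneg (E p)], indicator_le_one _⟩)
    s n

lemma prob_nonneg (s : S N) (n : ℕ) (E : (ℕ → S N) → Prop) : 0 ≤ prob A s n E :=
  tsum_nonneg fun _ => mul_nonneg (indicator_nonneg _) (hA.wt_nonneg _ _)

lemma prob_mono {E F : (ℕ → S N) → Prop} (h : ∀ p, E p → F p) (s : S N) (n : ℕ) :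
    prob A s n E ≤ prob A s n F :=
  hA.expec_mono (fun p => indicator_nonneg _)
    (fun p => by
      by_cases hE : E p
      · simp [hE, h p hE]
      · simpa [hE] using indicator_nonneg (F p))
    (fun p => indicator_le_one _) s n

lemma prob_le_one (s : S N) (n : ℕ) (E : (ℕ → S N) → Prop) : prob A s n E ≤ 1 :=
  (hA.prob_mono (F := fun _ => True) (fun _ _ => trivial) s n).trans <| by
    simpa [prob_eq_tsum] using (hA.summable_wt_and_tsum_wt_le_one n s).2

lemma prob_add_prob {E F G : (ℕ → S N) → Prop} (hG : ∀ p, G p ↔ E p ∨ F p)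
    (hEF : ∀ p, E p → ¬ F p) (s : S N) (n : ℕ) :
    prob A s n E + prob A s n F = prob A s n G := by
  rw [prob_eq_tsum, prob_eq_tsum, prob_eq_tsum,
    ← (hA.summable_prob E s n).tsum_add (hA.summable_prob F s n)]
  refine tsum_congr fun l => ?_
  rw [← add_mul, hG]
  by_cases hE : E (pos s l.1)
  · simp [hE, hEF _ hE]
  · simp [hE]

lemma prob_eq_sum {ι : Type*} (u : Finset ι) {G : (ℕ → S N) → Prop} {E : ι → (ℕ → S N) → Prop}
    (hG : ∀ p, G p ↔ ∃ c ∈ u, E c p)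
    (hdisj : ∀ p, ∀ c ∈ u, ∀ c' ∈ u, E c p → E c' p → c = c') (s : S N) (n : ℕ) :
    prob A s n G = ∑ c ∈ u, prob A s n (E c) := by
  have hind (p : ℕ → S N) : (if G p then (1 : ℝ) else 0) = ∑ c ∈ u, if E c p then 1 else 0 := by
    by_cases h : G p
    · obtain ⟨c, hc, hEc⟩ := (hG p).mp h
      rw [if_pos h, sum_eq_single_of_mem c hc fun c' hc' hne =>
        if_neg fun hEc' => hne (hdisj p c' hc' c hc hEc' hEc), if_pos hEc]
    · rw [if_neg h]
      exact (sum_eq_zero fun c hc => if_neg fun hEc => h ((hG p).mpr ⟨c, hc, hEc⟩)).symm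
  simp only [prob_eq_tsum, hind, sum_mul]
  exact Summable.tsum_finsetSum fun c _ => hA.summable_prob (E c) s n

/-- The Markov property at the deterministic time `n`. -/
theorem prob_and_shift {n m : ℕ} {E F : (ℕ → S N) → Prop} (hE : DeterminedUpTo n E)
    (hF : DeterminedUpTo m F) (s : S N) :
    prob A s (n + m) (fun p => E p ∧ F fun k => p (n + k))
      = expec A s n fun p => (if E p then 1 else 0) * prob A (p n) m F := by
  have hsplit (l₁ : Traj N n) (l₂ : Traj N m) :
      (if E (pos s (l₁.1 ++ l₂.1)) ∧ F (fun k => pos s (l₁.1 ++ l₂.1) (n + k)) then (1 : ℝ) else 0)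
          * wt A s (l₁.1 ++ l₂.1)
        = ((if E (pos s l₁.1) then 1 else 0) * wt A s l₁.1)
          * ((if F (pos (pos s l₁.1 n) l₂.1) then 1 else 0) * wt A (pos s l₁.1 n) l₂.1) := by
    obtain ⟨l₁, rfl⟩ := l₁
    obtain ⟨l₂, rfl⟩ := l₂
    have hE' : E (pos s (l₁ ++ l₂)) ↔ E (pos s l₁) :=
      hE _ _ fun k hk => pos_append_of_le s l₁ l₂ hk
    have hF' : F (fun k => pos s (l₁ ++ l₂) (l₁.length + k)) ↔ F (pos (pos s l₁ l₁.length) l₂) :=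
      hF _ _ fun k hk => pos_append_add s l₁ l₂ hk
    rw [wt_append]
    by_cases hEl : E (pos s l₁) <;> by_cases hFl : F (pos (pos s l₁ l₁.length) l₂) <;>
      simp [hE', hF', hEl, hFl]
  calc prob A s (n + m) (fun p => E p ∧ F fun k => p (n + k))
      = ∑' q : Traj N n × Traj N m, ((if E (pos s q.1.1) then 1 else 0) * wt A s q.1.1)
          * ((if F (pos (pos s q.1.1 n) q.2.1) then 1 else 0) * wt A (pos s q.1.1 n) q.2.1) := by
        rw [prob_eq_tsum, ← (Traj.appendEquiv n m).symm.tsum_eq]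
        -- `convert` reconciles the two `Decidable` instances of the conjunction
        exact tsum_congr fun q => by convert hsplit q.1 q.2 <;> rfl
    _ = ∑' l : Traj N n, ((if E (pos s l.1) then 1 else 0) * wt A s l.1)
          * prob A (pos s l.1 n) m F :=
        tsum_prod_mul_eq_of_tsum_le
          (f := fun l₁ : Traj N n => (if E (pos s l₁.1) then 1 else 0) * wt A s l₁.1)
          (g := fun l₁ (l₂ : Traj N m) =>
            (if F (pos (pos s l₁.1 n) l₂.1) then 1 else 0) * wt A (pos s l₁.1 n) l₂.1)
          (fun _ => mul_nonneg (indicator_nonneg _) (hA.wt_nonneg _ _))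
          (fun _ _ => mul_nonneg (indicator_nonneg _) (hA.wt_nonneg _ _)) (hA.summable_prob E s n)
          (fun l => hA.summable_prob F _ m) (fun l => hA.prob_le_one _ m F)
    _ = _ := tsum_congr fun _ => mul_right_comm _ _ _

theorem prob_and_eval_and_shift {n m : ℕ} {E F : (ℕ → S N) → Prop} (hE : DeterminedUpTo n E)
    (hF : DeterminedUpTo m F) (s t : S N) :
    prob A s (n + m) (fun p => (E p ∧ p n = t) ∧ F fun k => p (n + k))
      = prob A s n (fun p => E p ∧ p n = t) * prob A t m F := by
  rw [hA.prob_and_shift (hE.and (determinedUpTo_eval n t)) hF, prob_eq_tsum, ← tsum_mul_right]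
  refine tsum_congr fun l => ?_
  dsimp only
  split_ifs with h
  · rw [h.2]; ring
  · simp only [zero_mul]

lemma prob_add_le {n : ℕ} {E : (ℕ → S N) → Prop} (hE : DeterminedUpTo n E) (m : ℕ) (s : S N) :
    prob A s (n + m) E ≤ prob A s n E :=
  calc prob A s (n + m) E
      = prob A s (n + m) (fun p => E p ∧ (fun _ : ℕ → S N => True) fun k => p (n + k)) := by
        simp only [and_true]
    _ = expec A s n fun p => (if E p then 1 else 0) * prob A (p n) m fun _ => True :=
        hA.prob_and_shift (m := m) (F := fun _ => True) hE (fun _ _ _ => Iff.rfl) s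
    _ ≤ prob A s n E :=
        hA.expec_mono (fun p => mul_nonneg (indicator_nonneg _) (hA.prob_nonneg _ _ _))
          (fun p => mul_le_of_le_one_right (indicator_nonneg _) (hA.prob_le_one _ _ _))
          (fun p => indicator_le_one _) s n

lemma sum_prob_hitsAt_add_prob_avoid_le_one (x : ℤ) (s : S N) (K : ℕ) :
    ∑ n ∈ range K, prob A s n (hitsAt x n)
      + prob A s K (fun p => ∀ k < K, (p k).1 ≠ x) ≤ 1 := by
  induction K with
  | zero => simpa using hA.prob_le_one s 0 _
  | succ K ih =>
    have hsplit : prob A s K (hitsAt x K) + prob A s K (fun p => ∀ k < K + 1, (p k).1 ≠ x)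
        = prob A s K (fun p => ∀ k < K, (p k).1 ≠ x) := by
      refine hA.prob_add_prob (fun p => ⟨fun h => ?_, ?_⟩)
        (fun p hhit havoid => havoid K K.lt_succ_self hhit.1) s K
      · by_cases hx : (p K).1 = x
        · exact Or.inl ⟨hx, h⟩
        · refine Or.inr fun k hk => ?_
          rcases Nat.lt_succ_iff_lt_or_eq.mp hk with hk | rfl
          exacts [h k hk, hx]
      · rintro (h | h) k hk
        exacts [h.2 k hk, h k (Nat.lt_succ_of_lt hk)]
    have hlater := hA.prob_add_le (determinedUpTo_avoid x K) 1 s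
    rw [sum_range_succ]
    linarith

lemma summable_discounted_prob_hitsAt {v : ℝ} (hv0 : 0 ≤ v) (hv1 : v ≤ 1) (x : ℤ) (s : S N)
    (m : Fin N) : Summable fun n => v ^ n * prob A s n fun p => hitsAt x n p ∧ (p n).2 = m := by
  refine summable_of_sum_range_le (c := 1)
    (fun n => mul_nonneg (pow_nonneg hv0 n) (hA.prob_nonneg _ _ _)) fun K => ?_
  have hterm (n : ℕ) : v ^ n * prob A s n (fun p => hitsAt x n p ∧ (p n).2 = m)
      ≤ prob A s n (hitsAt x n) :=
    (mul_le_of_le_one_left (hA.prob_nonneg _ _ _) (pow_le_one₀ hv0 hv1)).trans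
      (hA.prob_mono (fun _ h => h.1) s n)
  have := hA.sum_prob_hitsAt_add_prob_avoid_le_one x s K
  have := hA.prob_nonneg s K fun p => ∀ k < K, (p k).1 ≠ x
  linarith [sum_le_sum fun n (_ : n ∈ range K) => hterm n]

theorem prob_eval_eq_sum_hitsAt (x : ℤ) (j : Fin N) (s : S N) (k : ℕ) :
    prob A s k (fun p => p k = (x, j))
      = ∑ nr ∈ antidiagonal k, ∑ m : Fin N,
          prob A s nr.1 (fun p => hitsAt x nr.1 p ∧ (p nr.1).2 = m)
            * prob A (x, m) nr.2 (fun p => p nr.2 = (x, j)) := by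
  rw [← sum_product', hA.prob_eq_sum (antidiagonal k ×ˢ univ)
    (E := fun c p => (hitsAt x c.1.1 p ∧ p c.1.1 = (x, c.2)) ∧ p (c.1.1 + c.1.2) = (x, j))]
  · refine sum_congr rfl fun ⟨⟨n, r⟩, m⟩ hc => ?_
    obtain rfl : n + r = k := by simpa using hc
    rw [hA.prob_and_eval_and_shift (determinedUpTo_hitsAt x n) (determinedUpTo_eval r (x, j))]
    congr 2
    funext p
    exact propext <| and_congr_right fun h => by simp [Prod.ext_iff, h.1]
  · intro p
    constructor
    · intro hk
      obtain ⟨n, hn, hhit⟩ := exists_hitsAt_of_level (congrArg Prod.fst hk)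
      refine ⟨((n, k - n), (p n).2), by simp [hn], ⟨hhit, Prod.ext hhit.1 rfl⟩, ?_⟩
      rwa [Nat.add_sub_cancel' hn]
    · rintro ⟨⟨⟨n, r⟩, m⟩, hc, -, h⟩
      obtain rfl : n + r = k := by simpa using hc
      exact h
  · rintro p ⟨⟨n, r⟩, m⟩ hc ⟨⟨n', r'⟩, m'⟩ hc' ⟨⟨h, hm⟩, -⟩ ⟨⟨h', hm'⟩, -⟩
    dsimp only at h hm h' hm'
    obtain rfl := hitsAt_unique h h'
    have hr : r = r' := by
      simp only [mem_product, HasAntidiagonal.mem_antidiagonal] at hc hc'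
      omega
    have hmm : m = m' := by simpa using hm.symm.trans hm'
    rw [hr, hmm]

theorem discounted_prob_eval_eq_sum_hitsAt (v : ℝ) (x : ℤ) (s : S N) (j : Fin N) (k : ℕ) :
    v ^ k * prob A s k (fun p => p k = (x, j))
      = ∑ m : Fin N, ∑ nr ∈ antidiagonal k,
          (v ^ nr.1 * prob A s nr.1 fun p => hitsAt x nr.1 p ∧ (p nr.1).2 = m)
            * (v ^ nr.2 * prob A ((0 : ℤ), m) nr.2 fun p => p nr.2 = ((0 : ℤ), j)) := by
  rw [sum_comm, hA.prob_eval_eq_sum_hitsAt, mul_sum]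
  refine sum_congr rfl fun nr hnr => (mul_sum _ _ _).trans (sum_congr rfl fun m _ => ?_)
  obtain rfl : nr.1 + nr.2 = k := HasAntidiagonal.mem_antidiagonal.mp hnr
  have hlevel := prob_eval_translate A x ((0 : ℤ), m) ((0 : ℤ), j) nr.2
  simp only [translate_apply, zero_add] at hlevel
  rw [hlevel, pow_add]
  ring

end IsSubstochastic

theorem statement4_general {N : ℕ} (A : ℤ → Matrix (Fin N) (Fin N) ℝ)
    (hA : ∀ m i j, 0 ≤ A m i j)
    (hsum : ∀ i, Summable fun q : ℤ × Fin N => A q.1 i q.2)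
    (hsub : ∀ i, ∑' q : ℤ × Fin N, A q.1 i q.2 ≤ 1)
    (v : ℝ) (hv0 : 0 < v) (hv1 : v ≤ 1)
    (hLv : ∀ i j : Fin N,
      Summable fun k : ℕ => v ^ k * prob A ((0 : ℤ), i) k fun p => p k = ((0 : ℤ), j)) :
    ∀ x : ℤ, occMat A v x = hitMat A v x * occMat A v 0 := by
  intro x
  have hP := isSubstochastic_of_rows hA hsum hsub
  ext i j
  set a : Fin N → ℕ → ℝ := fun m n =>
    v ^ n * prob A ((0 : ℤ), i) n fun p => hitsAt x n p ∧ (p n).2 = m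
  set b : Fin N → ℕ → ℝ := fun m r =>
    v ^ r * prob A ((0 : ℤ), m) r fun p => p r = ((0 : ℤ), j)
  have ha (m : Fin N) : Summable fun n => ‖a m n‖ :=
    (hP.summable_discounted_prob_hitsAt hv0.le hv1 x _ m).abs
  have hb (m : Fin N) : Summable fun r => ‖b m r‖ := (hLv m j).abs
  have hconv (k : ℕ) := hP.discounted_prob_eval_eq_sum_hitsAt v x ((0 : ℤ), i) j k
  calc occMat A v x i j = ∑' k, ∑ m, ∑ nr ∈ antidiagonal k, a m nr.1 * b m nr.2 := tsum_congr hconv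
    _ = ∑ m, ∑' k, ∑ nr ∈ antidiagonal k, a m nr.1 * b m nr.2 :=
      Summable.tsum_finsetSum fun m _ =>
        (summable_norm_sum_mul_antidiagonal_of_summable_norm (ha m) (hb m)).of_norm
    _ = ∑ m, hitMat A v x i m * occMat A v 0 m j :=
      sum_congr rfl fun m _ =>
        (tsum_mul_tsum_eq_tsum_sum_antidiagonal_of_summable_norm (ha m) (hb m)).symm
    _ = (hitMat A v x * occMat A v 0) i j := (Matrix.mul_apply ..).symm

/-- v-discounted version: L̃_v(x,∞) = 𝔼(v^{τ^{x}}; J_{τ^{x}}) · L̃_v. -/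
theorem statement4 {N : ℕ} (hN : 0 < N) (A : ℤ → Matrix (Fin N) (Fin N) ℝ)
    (hA : ∀ m i j, 0 ≤ A m i j)
    (hskip : ∀ m : ℤ, 2 ≤ m → A m = 0)
    (hsum : ∀ i, Summable fun q : ℤ × Fin N => A q.1 i q.2)
    (hsub : ∀ i, ∑' q : ℤ × Fin N, A q.1 i q.2 ≤ 1)
    (v : ℝ) (hv0 : 0 < v) (hv1 : v ≤ 1)
    (hLv : ∀ i j : Fin N,
      Summable fun k : ℕ => v ^ k * prob A ((0 : ℤ), i) k fun p => p k = ((0 : ℤ), j)) :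
    ∀ x : ℤ, occMat A v x = hitMat A v x * occMat A v 0 :=
  statement4_general A hA hsum hsub v hv0 hv1 hLv

end MACPaper

end
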